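/- Assume (A1): σ : ℝ×[0,T] → ℝ is bounded, bounded away from zero and Lipschitz continuous. Then there exists a constant M>0 such that for all κ>0 and all functions f : ℝ×[0,T] → ℝ that are bounded and Hölder continuous on compact subsets, every bounded classical (C^{2,1}) solution v of the Cauchy problem D_t v + (σ²(x,t)/2)·D_x² v + f(x,t) = 0 on ℝ×[0,T) with v(x,T) = 0 for all x ∈ ℝ satisfies sup_{(x,t)∈ℝ×[0,T)} e^{−κ(T−t)}|D_x v(x,t)| ≤ (M/κ^{1/3})·sup_{(x,t)∈ℝ×[0,T]} e^{−κ(T−t)}|f(x,t)|. -/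

import Mathlib

open Set

/-- Partial derivative in the space variable `x`. -/
noncomputable def Dx (u : ℝ → ℝ → ℝ) (x t : ℝ) : ℝ := deriv (fun y => u y t) x

/-- Second partial derivative in the space variable `x`. -/
noncomputable def Dxx (u : ℝ → ℝ → ℝ) (x t : ℝ) : ℝ := deriv (fun y => Dx u y t) x

/-- Partial derivative in the time variable `t`. -/
noncomputable def Dt (u : ℝ → ℝ → ℝ) (x t : ℝ) : ℝ := deriv (fun s => u x s) t

/-- (A1): `σ` is bounded, bounded away from zero and Lipschitz continuous on `ℝ×[0,T]`. -/
def CondA1 (T : ℝ) (σ : ℝ → ℝ → ℝ) : Prop :=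
  (∃ C, ∀ x : ℝ, ∀ t ∈ Icc (0:ℝ) T, |σ x t| ≤ C) ∧
  (∃ m > 0, ∀ x : ℝ, ∀ t ∈ Icc (0:ℝ) T, m ≤ |σ x t|) ∧
  (∃ L > 0, ∀ x x' : ℝ, ∀ t ∈ Icc (0:ℝ) T, ∀ t' ∈ Icc (0:ℝ) T,
    |σ x t - σ x' t'| ≤ L * (|x - x'| + |t - t'|))

/-- Hölder continuity on compact subsets of a set `O ⊆ ℝ²`. -/
def HolderOnCompacts (O : Set (ℝ × ℝ)) (f : ℝ → ℝ → ℝ) : Prop :=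
  ∀ U ⊆ O, IsCompact U → ∃ L > 0, ∃ l ∈ Ioc (0:ℝ) 1,
    ∀ p ∈ U, ∀ q ∈ U, |f p.1 p.2 - f q.1 q.2| ≤ L * ‖p - q‖ ^ l

/-- `v` is a bounded classical solution of the terminal-value Cauchy problem
`D_t v + (σ²/2)·D_x² v + f = 0` on `ℝ×[0,T)` with `v(·,T) = 0`. -/
def IsBddClassicalSolCauchy (T : ℝ) (σ f v : ℝ → ℝ → ℝ) : Prop :=
  (∃ C, ∀ x : ℝ, ∀ t ∈ Icc (0:ℝ) T, |v x t| ≤ C) ∧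
  ContinuousOn (fun p : ℝ × ℝ => v p.1 p.2) (univ ×ˢ Icc 0 T) ∧
  (∀ x : ℝ, ∀ t ∈ Ico (0:ℝ) T,
    DifferentiableAt ℝ (fun y => v y t) x ∧
    DifferentiableAt ℝ (fun y => Dx v y t) x ∧
    DifferentiableAt ℝ (fun s => v x s) t) ∧
  ContinuousOn (fun p : ℝ × ℝ => Dx v p.1 p.2) (univ ×ˢ Ico 0 T) ∧
  ContinuousOn (fun p : ℝ × ℝ => Dxx v p.1 p.2) (univ ×ˢ Ico 0 T) ∧
  ContinuousOn (fun p : ℝ × ℝ => Dt v p.1 p.2) (univ ×ˢ Ico 0 T) ∧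
  (∀ x : ℝ, ∀ t ∈ Ico (0:ℝ) T,
    Dt v x t + σ x t ^ 2 / 2 * Dxx v x t + f x t = 0) ∧
  (∀ x : ℝ, v x T = 0)

/-!
Doubling of variables. For `y ≤ x` compare the weighted increment
`e^{-κ(T-t)} (v(x,t) - v(y,t))` with the barrier `(A₀ + A₁ (T - t)) (1 - e^{-ρ(x-y)})`. At a
positive maximum of their difference (penalised by `ε (x² + y²)` so that it is attained), the
second-order conditions in `x` and `y`, the first-order condition in `t` and the equation give
`(κ A₀ + A₁) (1 - e^{-ρ(x-y)}) + 2 m A₀ ρ² e^{-ρ(x-y)} ≤ 2 N + O(ε)`, where `m ≤ σ²/2` and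
`N = sup e^{-κ(T-t)} |f|`. So if both `κ A₀ + A₁` and `2 m A₀ ρ²` exceed `2 N`, then letting
`ε → 0`, using `1 - e^{-z} ≤ z` and arguing likewise for `-v`, `e^{-κ(T-t)} v(·, t)` is
Lipschitz with constant
`(A₀ + A₁ T) ρ`. The choice `A₀ = 2N/κ`, `ρ² = κ/(2m)` gives the bound `O(N/√κ)`, and
`A₀ = NT/m`, `A₁ = 2N`, `ρ = 1/√T` gives `O(N √T)`; finally `min (κ^{-1/2}) 1 ≤ κ^{-1/3}`.
-/

open Real Filter Topology

lemma IsLocalMax.secondDeriv_nonpos {f f' : ℝ → ℝ} {a q : ℝ} (h : IsLocalMax f a)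
    (hf : ∀ᶠ x in 𝓝 a, HasDerivAt f (f' x) x) (hf' : HasDerivAt f' q a) : q ≤ 0 := by
  by_contra! hq
  have hderiv : deriv f =ᶠ[𝓝 a] f' := hf.mono fun x hx => hx.deriv
  -- by the second-derivative test `a` would also be a local minimum, so `f` would be constant
  have hmin : IsLocalMin f a :=
    isLocalMin_of_deriv_deriv_pos (by rwa [(hf'.congr_of_eventuallyEq hderiv).deriv])
      (hderiv.self_of_nhds.trans (h.hasDerivAt_eq_zero hf.self_of_nhds))
      hf.self_of_nhds.continuousAt
  have hconst : f =ᶠ[𝓝 a] fun _ => f a := (h.and hmin).mono fun x hx => le_antisymm hx.1 hx.2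
  have hzero : f' =ᶠ[𝓝 a] fun _ => 0 :=
    (hf.and hconst.eventuallyEq_nhds).mono fun x hx => hx.1.unique <| by
      simpa using (hasDerivAt_const x (f a)).congr_of_eventuallyEq hx.2
  exact hq.ne' <| (hf'.congr_of_eventuallyEq hzero.symm).unique (hasDerivAt_const a 0)

lemma IsMaxOn.hasDerivAt_nonpos_of_Icc {f : ℝ → ℝ} {a b d : ℝ} (h : IsMaxOn f (Icc a b) a)
    (hab : a < b) (hf : HasDerivAt f d a) : d ≤ 0 := by
  have hcone : (1 : ℝ) ∈ posTangentConeAt (Icc a b) a :=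
    one_mem_posTangentConeAt_iff_frequently.2
      (Eventually.frequently (mem_of_superset (Ioo_mem_nhdsGT hab) Ioo_subset_Icc_self))
  simpa using h.localize.hasFDerivWithinAt_nonpos hf.hasFDerivAt.hasFDerivWithinAt hcone

lemma secondDeriv_add_exp_sub_sq_le {w w' : ℝ → ℝ} {w'' A ρ c ε z₀ : ℝ}
    (hw : ∀ z, HasDerivAt w (w' z) z) (hw' : HasDerivAt w' w'' z₀)
    (hmax : IsLocalMax (fun z => w z + A * exp (-ρ * (z - c)) - ε * z ^ 2) z₀) :
    w'' + A * ρ ^ 2 * exp (-ρ * (z₀ - c)) ≤ 2 * ε := by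
  have hexp (z : ℝ) : HasDerivAt (fun z => exp (-ρ * (z - c))) (exp (-ρ * (z - c)) * -ρ) z := by
    simpa using (((hasDerivAt_id z).sub_const c).const_mul (-ρ)).exp
  have hd (z : ℝ) : HasDerivAt (fun z => w z + A * exp (-ρ * (z - c)) - ε * z ^ 2)
      (w' z - A * ρ * exp (-ρ * (z - c)) - 2 * ε * z) z := by
    refine (((hw z).add ((hexp z).const_mul A)).sub
      ((hasDerivAt_pow 2 z).const_mul ε)).congr_deriv ?_
    push_cast
    ring
  have hd2 : HasDerivAt (fun z => w' z - A * ρ * exp (-ρ * (z - c)) - 2 * ε * z)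
      (w'' + A * ρ ^ 2 * exp (-ρ * (z₀ - c)) - 2 * ε) z₀ := by
    refine ((hw'.sub ((hexp z₀).const_mul (A * ρ))).sub
      ((hasDerivAt_id z₀).const_mul (2 * ε))).congr_deriv ?_
    ring
  linarith [hmax.secondDeriv_nonpos (Eventually.of_forall hd) hd2]

lemma one_sub_exp_neg_mul_nonneg {ρ z : ℝ} (hρ : 0 ≤ ρ) (hz : 0 ≤ z) :
    0 ≤ 1 - exp (-ρ * z) := by
  rw [sub_nonneg, exp_le_one_iff]
  nlinarith

lemma le_mul_of_forall_lt_imp_le_mul {a c N : ℝ} (h : ∀ N' > N, a ≤ c * N') : a ≤ c * N :=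
  ge_of_tendsto ((continuous_const_mul c).tendsto N |>.mono_left nhdsWithin_le_nhds)
    (eventually_nhdsWithin_of_forall (s := Ioi N) h)

lemma le_div_rpow_third_mul_of_le {X a b N κ : ℝ} (hκ : 0 < κ) (ha : 0 ≤ a) (hb : 0 ≤ b)
    (hN : 0 ≤ N) (h₁ : X ≤ a / √κ * N) (h₂ : X ≤ b * N) : X ≤ (a + b) / κ ^ (1 / 3 : ℝ) * N := by
  have hκ3 : 0 < κ ^ (1 / 3 : ℝ) := rpow_pos_of_pos hκ _
  rcases le_total 1 κ with h | h
  · have hroot : κ ^ (1 / 3 : ℝ) ≤ √κ := by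
      rw [sqrt_eq_rpow]
      exact rpow_le_rpow_of_exponent_le h (by norm_num)
    calc X ≤ a / √κ * N := h₁
      _ ≤ (a + b) / κ ^ (1 / 3 : ℝ) * N := by gcongr; linarith
  · have hroot : κ ^ (1 / 3 : ℝ) ≤ 1 := rpow_le_one hκ.le h (by norm_num)
    calc X ≤ b * N := h₂
      _ ≤ (a + b) / κ ^ (1 / 3 : ℝ) * N := by
        gcongr
        rw [le_div_iff₀ hκ3]
        nlinarith

lemma sq_lt_sq_add_sq_of_lt_norm {x y t R : ℝ} (ht : |t| ≤ R) (h : R < ‖(x, y, t)‖) :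
    R ^ 2 < x ^ 2 + y ^ 2 := by
  have hR : 0 ≤ R := (abs_nonneg t).trans ht
  simp only [Prod.norm_def, Real.norm_eq_abs, lt_sup_iff] at h
  rcases h with hx | hy | ht'
  · nlinarith [sq_abs x, sq_nonneg y]
  · nlinarith [sq_abs y, sq_nonneg x]
  · linarith

lemma IsClosed.exists_isMaxOn_of_le_sub_sq {S : Set (ℝ × ℝ × ℝ)} {G : ℝ × ℝ × ℝ → ℝ}
    {T B ε : ℝ} {p₀ : ℝ × ℝ × ℝ} (hS : IsClosed S) (hp₀ : p₀ ∈ S) (hG : ContinuousOn G S)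
    (hST : ∀ p ∈ S, |p.2.2| ≤ T) (hε : 0 < ε) (hle : ∀ p ∈ S, G p ≤ B - ε * (p.1 ^ 2 + p.2.1 ^ 2)) :
    ∃ p ∈ S, IsMaxOn G S p := by
  refine hG.exists_isMaxOn' hS hp₀ ?_
  set R := max T ((B - G p₀) / ε + 1)
  have hR : B - G p₀ ≤ ε * R ^ 2 := by
    have h1 : (B - G p₀) / ε + 1 ≤ R := le_max_right _ _
    have h2 : B - G p₀ + ε ≤ ε * R := by
      rw [div_add_one hε.ne', div_le_iff₀ hε] at h1; linarith
    nlinarith [mul_nonneg hε.le (sq_nonneg (R - 1))]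
  rw [Filter.Eventually, mem_inf_principal, mem_cocompact]
  refine ⟨Metric.closedBall 0 R, isCompact_closedBall _ _, fun ⟨x, y, t⟩ hp hpS => ?_⟩
  simp only [mem_compl_iff, Metric.mem_closedBall, dist_zero_right, not_le] at hp
  have hlt : R ^ 2 < x ^ 2 + y ^ 2 :=
    sq_lt_sq_add_sq_of_lt_norm ((hST _ hpS).trans (le_max_left _ _)) hp
  have hGp : G (x, y, t) ≤ B - ε * (x ^ 2 + y ^ 2) := hle _ hpS
  show G (x, y, t) ≤ G p₀
  linarith [mul_lt_mul_of_pos_left hlt hε]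

section Negation

variable {u : ℝ → ℝ → ℝ}

@[simp] lemma Dx_neg (x t : ℝ) : Dx (fun y s => -u y s) x t = -Dx u x t := deriv.neg

@[simp] lemma Dxx_neg (x t : ℝ) : Dxx (fun y s => -u y s) x t = -Dxx u x t := by
  simp only [Dxx, Dx_neg]
  exact deriv.neg

@[simp] lemma Dt_neg (x t : ℝ) : Dt (fun y s => -u y s) x t = -Dt u x t := deriv.neg

lemma IsBddClassicalSolCauchy.neg {T : ℝ} {σ f : ℝ → ℝ → ℝ} (h : IsBddClassicalSolCauchy T σ f u) :
    IsBddClassicalSolCauchy T σ (fun x t => -f x t) (fun x t => -u x t) := by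
  obtain ⟨⟨K, hK⟩, hcont, hdiff, hDx, hDxx, hDt, hpde, hterm⟩ := h
  refine ⟨⟨K, fun x t ht => by simpa using hK x t ht⟩, hcont.neg, fun x t ht => ?_,
    by simp only [Dx_neg]; exact hDx.neg, by simp only [Dxx_neg]; exact hDxx.neg,
    by simp only [Dt_neg]; exact hDt.neg,
    fun x t ht => ?_, by simp [hterm]⟩
  · obtain ⟨h1, h2, h3⟩ := hdiff x t ht
    exact ⟨h1.neg, by simpa using h2.neg, h3.neg⟩
  · simp only [Dt_neg, Dxx_neg]
    linarith [hpde x t ht]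

end Negation

def gapDomain (T : ℝ) : Set (ℝ × ℝ × ℝ) := {p | p.2.1 ≤ p.1 ∧ p.2.2 ∈ Icc 0 T}

noncomputable def gap (T κ A₀ A₁ ρ ε : ℝ) (v : ℝ → ℝ → ℝ) (x y t : ℝ) : ℝ :=
  exp (-κ * (T - t)) * (v x t - v y t) - (A₀ + A₁ * (T - t)) * (1 - exp (-ρ * (x - y)))
    - ε * (x ^ 2 + y ^ 2)

section Gap

variable {T κ A₀ A₁ ρ ε x₀ y₀ t₀ m C N : ℝ} {σ f v : ℝ → ℝ → ℝ}

lemma isClosed_gapDomain : IsClosed (gapDomain T) :=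
  (isClosed_le continuous_snd.fst continuous_fst).inter (isClosed_Icc.preimage continuous_snd.snd)

lemma exists_isMaxOn_gap (hT : 0 ≤ T) (hκ : 0 ≤ κ) (hA₀ : 0 ≤ A₀) (hA₁ : 0 ≤ A₁) (hρ : 0 ≤ ρ)
    (hε : 0 < ε) {K : ℝ} (hK : ∀ x, ∀ t ∈ Icc (0:ℝ) T, |v x t| ≤ K)
    (hv : ContinuousOn (fun p : ℝ × ℝ => v p.1 p.2) (univ ×ˢ Icc 0 T)) :
    ∃ p ∈ gapDomain T, IsMaxOn (fun p => gap T κ A₀ A₁ ρ ε v p.1 p.2.1 p.2.2) (gapDomain T) p := by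
  have hmaps (g : ℝ × ℝ × ℝ → ℝ) :
      MapsTo (fun p => (g p, p.2.2)) (gapDomain T) (univ ×ˢ Icc 0 T) :=
    fun p hp => ⟨mem_univ _, hp.2⟩
  have hcont : ContinuousOn (fun p => gap T κ A₀ A₁ ρ ε v p.1 p.2.1 p.2.2) (gapDomain T) := by
    have hx := hv.comp (by fun_prop : Continuous fun p : ℝ × ℝ × ℝ => (p.1, p.2.2)).continuousOn
      (hmaps Prod.fst)
    have hy := hv.comp (by fun_prop : Continuous fun p : ℝ × ℝ × ℝ => (p.2.1, p.2.2)).continuousOn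
      (hmaps fun p => p.2.1)
    exact (((continuous_exp.comp (by fun_prop)).continuousOn.mul (hx.sub hy)).sub
      (by fun_prop)).sub (by fun_prop)
  refine isClosed_gapDomain.exists_isMaxOn_of_le_sub_sq (p₀ := (0, 0, T)) (B := 2 * K)
    ⟨le_rfl, hT, le_rfl⟩ hcont (fun p hp => abs_le.2 ⟨by linarith [hp.2.1], hp.2.2⟩) hε ?_
  rintro ⟨x, y, t⟩ ⟨hxy, ht⟩
  have he : exp (-κ * (T - t)) ≤ 1 := exp_le_one_iff.2 (by nlinarith [ht.2])
  have hK0 : 0 ≤ K := (abs_nonneg _).trans (hK x t ht)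
  have hvx := abs_le.1 (hK x t ht)
  have hvy := abs_le.1 (hK y t ht)
  have hdiff : exp (-κ * (T - t)) * (v x t - v y t) ≤ 2 * K :=
    calc _ ≤ exp (-κ * (T - t)) * (2 * K) := by gcongr; linarith
      _ ≤ 2 * K := mul_le_of_le_one_left (by linarith) he
  have hbarrier : 0 ≤ (A₀ + A₁ * (T - t)) * (1 - exp (-ρ * (x - y))) :=
    mul_nonneg (by nlinarith [ht.2]) (one_sub_exp_neg_mul_nonneg hρ (sub_nonneg.2 hxy))
  simp only [gap]
  linarith

lemma gap_max_Dxx_left (hsol : IsBddClassicalSolCauchy T σ f v)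
    (hmax : IsMaxOn (fun p => gap T κ A₀ A₁ ρ ε v p.1 p.2.1 p.2.2) (gapDomain T) (x₀, y₀, t₀))
    (ht₀ : t₀ ∈ Ico 0 T) (hyx : y₀ < x₀) :
    exp (-κ * (T - t₀)) * Dxx v x₀ t₀ + (A₀ + A₁ * (T - t₀)) * ρ ^ 2 * exp (-ρ * (x₀ - y₀))
      ≤ 2 * ε := by
  obtain ⟨-, -, hdiff, -⟩ := hsol
  refine secondDeriv_add_exp_sub_sq_le (w := fun z => exp (-κ * (T - t₀)) * v z t₀)
    (fun z => (hdiff z t₀ ht₀).1.hasDerivAt.const_mul _)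
    ((hdiff x₀ t₀ ht₀).2.1.hasDerivAt.const_mul _) ?_
  filter_upwards [eventually_gt_nhds hyx] with z hz
  have := hmax (show (z, y₀, t₀) ∈ gapDomain T from ⟨hz.le, Ico_subset_Icc_self ht₀⟩)
  simp only [gap, mem_ofPred_eq] at this
  linarith

lemma gap_max_Dxx_right (hsol : IsBddClassicalSolCauchy T σ f v)
    (hmax : IsMaxOn (fun p => gap T κ A₀ A₁ ρ ε v p.1 p.2.1 p.2.2) (gapDomain T) (x₀, y₀, t₀))
    (ht₀ : t₀ ∈ Ico 0 T) (hyx : y₀ < x₀) :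
    -(exp (-κ * (T - t₀)) * Dxx v y₀ t₀) + (A₀ + A₁ * (T - t₀)) * ρ ^ 2 * exp (-ρ * (x₀ - y₀))
      ≤ 2 * ε := by
  obtain ⟨-, -, hdiff, -⟩ := hsol
  have hflip (z : ℝ) : -(-ρ) * (z - x₀) = -ρ * (x₀ - z) := by ring
  have := secondDeriv_add_exp_sub_sq_le (w := fun z => -(exp (-κ * (T - t₀)) * v z t₀))
    (A := A₀ + A₁ * (T - t₀)) (ρ := -ρ) (c := x₀) (ε := ε)
    (fun z => ((hdiff z t₀ ht₀).1.hasDerivAt.const_mul _).neg)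
    ((hdiff y₀ t₀ ht₀).2.1.hasDerivAt.const_mul _).neg ?_
  · rwa [neg_sq, hflip] at this
  filter_upwards [eventually_lt_nhds hyx] with z hz
  have := hmax (show (x₀, z, t₀) ∈ gapDomain T from ⟨hz.le, Ico_subset_Icc_self ht₀⟩)
  simp only [gap, mem_ofPred_eq] at this
  simp only [hflip]
  linarith

lemma gap_max_Dt (hsol : IsBddClassicalSolCauchy T σ f v)
    (hmax : IsMaxOn (fun p => gap T κ A₀ A₁ ρ ε v p.1 p.2.1 p.2.2) (gapDomain T) (x₀, y₀, t₀))
    (ht₀ : t₀ ∈ Ico 0 T) (hyx : y₀ ≤ x₀) :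
    exp (-κ * (T - t₀)) * (κ * (v x₀ t₀ - v y₀ t₀) + (Dt v x₀ t₀ - Dt v y₀ t₀))
      + A₁ * (1 - exp (-ρ * (x₀ - y₀))) ≤ 0 := by
  obtain ⟨-, -, hdiff, -⟩ := hsol
  have hweight : HasDerivAt (fun s => exp (-κ * (T - s))) (exp (-κ * (T - t₀)) * (-κ * -1)) t₀ :=
    (((hasDerivAt_id t₀).const_sub T).const_mul (-κ)).exp
  have hincr : HasDerivAt (fun s => v x₀ s - v y₀ s) (Dt v x₀ t₀ - Dt v y₀ t₀) t₀ :=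
    (hdiff x₀ t₀ ht₀).2.2.hasDerivAt.sub (hdiff y₀ t₀ ht₀).2.2.hasDerivAt
  have hbarrier : HasDerivAt (fun s => (A₀ + A₁ * (T - s)) * (1 - exp (-ρ * (x₀ - y₀))))
      (A₁ * -1 * (1 - exp (-ρ * (x₀ - y₀)))) t₀ :=
    ((((hasDerivAt_id t₀).const_sub T).const_mul A₁).const_add A₀).mul_const _
  have hgap : HasDerivAt (fun s => gap T κ A₀ A₁ ρ ε v x₀ y₀ s)
      (exp (-κ * (T - t₀)) * (κ * (v x₀ t₀ - v y₀ t₀) + (Dt v x₀ t₀ - Dt v y₀ t₀))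
        + A₁ * (1 - exp (-ρ * (x₀ - y₀)))) t₀ := by
    unfold gap
    exact (((hweight.mul hincr).sub hbarrier).sub_const _).congr_deriv (by ring)
  exact IsMaxOn.hasDerivAt_nonpos_of_Icc
    (fun s hs => hmax (a := (x₀, y₀, s)) ⟨hyx, ht₀.1.trans hs.1, hs.2⟩)
    ht₀.2 hgap

lemma gap_max_Dt_sub_ge (hsol : IsBddClassicalSolCauchy T σ f v)
    (hmax : IsMaxOn (fun p => gap T κ A₀ A₁ ρ ε v p.1 p.2.1 p.2.2) (gapDomain T) (x₀, y₀, t₀))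
    (ht₀ : t₀ ∈ Ico 0 T) (hyx : y₀ < x₀) (hA₀ : 0 ≤ A₀) (hA₁ : 0 ≤ A₁) (hε : 0 ≤ ε)
    (hσ : ∀ x, ∀ t ∈ Icc (0:ℝ) T, m ≤ σ x t ^ 2 / 2 ∧ σ x t ^ 2 / 2 ≤ C)
    (hN : ∀ x, ∀ t ∈ Icc (0:ℝ) T, exp (-κ * (T - t)) * |f x t| ≤ N) :
    2 * m * A₀ * ρ ^ 2 * exp (-ρ * (x₀ - y₀)) - 4 * C * ε - 2 * N
      ≤ exp (-κ * (T - t₀)) * (Dt v x₀ t₀ - Dt v y₀ t₀) := by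
  have hx := gap_max_Dxx_left hsol hmax ht₀ hyx
  have hy := gap_max_Dxx_right hsol hmax ht₀ hyx
  have ht₀' := Ico_subset_Icc_self ht₀
  set e := exp (-κ * (T - t₀))
  set W := (A₀ + A₁ * (T - t₀)) * ρ ^ 2 * exp (-ρ * (x₀ - y₀))
  set W₀ := A₀ * ρ ^ 2 * exp (-ρ * (x₀ - y₀))
  have hW₀ : 0 ≤ W₀ := by positivity
  have hW : W₀ ≤ W :=
    mul_le_mul_of_nonneg_right (mul_le_mul_of_nonneg_right
      (le_add_of_nonneg_right (mul_nonneg hA₁ (by linarith [ht₀.2]))) (sq_nonneg ρ))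
      (exp_pos _).le
  have hdiffusion (z X : ℝ) (hX : W - 2 * ε ≤ X) : m * W₀ - 2 * C * ε ≤ σ z t₀ ^ 2 / 2 * X := by
    obtain ⟨hm, hC⟩ := hσ z t₀ ht₀'
    have ha : 0 ≤ σ z t₀ ^ 2 / 2 := by positivity
    have h1 := mul_le_mul_of_nonneg_left hX ha
    have h2 := mul_le_mul_of_nonneg_left hW ha
    have h3 := mul_le_mul_of_nonneg_right hm hW₀
    have h4 := mul_le_mul_of_nonneg_right hC hε
    linarith
  have hfx : e * f x₀ t₀ ≤ N :=
    (mul_le_mul_of_nonneg_left (le_abs_self _) (exp_pos _).le).trans (hN x₀ t₀ ht₀')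
  have hfy : e * -f y₀ t₀ ≤ N :=
    (mul_le_mul_of_nonneg_left (neg_le_abs _) (exp_pos _).le).trans (hN y₀ t₀ ht₀')
  have ⟨_, _, _, _, _, _, hpde, _⟩ := hsol
  have hpx : Dt v x₀ t₀ = -(σ x₀ t₀ ^ 2 / 2 * Dxx v x₀ t₀) - f x₀ t₀ := by
    linarith [hpde x₀ t₀ ht₀]
  have hpy : Dt v y₀ t₀ = -(σ y₀ t₀ ^ 2 / 2 * Dxx v y₀ t₀) - f y₀ t₀ := by
    linarith [hpde y₀ t₀ ht₀]
  rw [hpx, hpy]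
  linarith [hdiffusion x₀ (-(e * Dxx v x₀ t₀)) (by linarith),
    hdiffusion y₀ (e * Dxx v y₀ t₀) (by linarith)]

lemma gap_nonpos (hT : 0 ≤ T) (hκ : 0 ≤ κ) (hA₀ : 0 ≤ A₀) (hA₁ : 0 ≤ A₁) (hρ : 0 ≤ ρ)
    (hε : 0 < ε) (hσ : ∀ x, ∀ t ∈ Icc (0:ℝ) T, m ≤ σ x t ^ 2 / 2 ∧ σ x t ^ 2 / 2 ≤ C)
    (hsol : IsBddClassicalSolCauchy T σ f v)
    (hN : ∀ x, ∀ t ∈ Icc (0:ℝ) T, exp (-κ * (T - t)) * |f x t| ≤ N)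
    (hc₁ : 2 * N + 4 * C * ε < κ * A₀ + A₁) (hc₂ : 2 * N + 4 * C * ε < 2 * m * A₀ * ρ ^ 2)
    {x y t : ℝ} (hxy : y ≤ x) (ht : t ∈ Icc 0 T) : gap T κ A₀ A₁ ρ ε v x y t ≤ 0 := by
  have ⟨⟨_, hK⟩, hcont, _, _, _, _, _, hterm⟩ := hsol
  obtain ⟨⟨x₀, y₀, t₀⟩, hmem, hmax⟩ := exists_isMaxOn_gap hT hκ hA₀ hA₁ hρ hε hK hcont
  obtain ⟨hyx₀, ht₀⟩ : y₀ ≤ x₀ ∧ t₀ ∈ Icc 0 T := hmem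
  refine (hmax (a := (x, y, t)) ⟨hxy, ht⟩).trans ?_
  by_contra! hpos
  change 0 < gap T κ A₀ A₁ ρ ε v x₀ y₀ t₀ at hpos
  have hB := one_sub_exp_neg_mul_nonneg hρ (sub_nonneg.2 hyx₀)
  have ht₀T : t₀ < T := by
    refine ht₀.2.lt_of_ne ?_
    rintro rfl
    simp only [gap, hterm, sub_self, mul_zero, add_zero] at hpos
    nlinarith [mul_nonneg hA₀ hB, mul_nonneg hε.le (add_nonneg (sq_nonneg x₀) (sq_nonneg y₀))]
  have hyx : y₀ < x₀ := by
    refine hyx₀.lt_of_ne ?_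
    rintro rfl
    simp only [gap, sub_self, mul_zero, exp_zero, zero_sub] at hpos
    nlinarith [mul_nonneg hε.le (add_nonneg (sq_nonneg y₀) (sq_nonneg y₀))]
  have ht₀' : t₀ ∈ Ico 0 T := ⟨ht₀.1, ht₀T⟩
  have htime := gap_max_Dt hsol hmax ht₀' hyx₀
  have hell := gap_max_Dt_sub_ge hsol hmax ht₀' hyx hA₀ hA₁ hε.le hσ hN
  set E := exp (-ρ * (x₀ - y₀))
  have hincr : A₀ * (1 - E) ≤ exp (-κ * (T - t₀)) * (v x₀ t₀ - v y₀ t₀) := by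
    simp only [gap] at hpos
    linarith [mul_nonneg (mul_nonneg hA₁ (sub_nonneg.2 ht₀.2)) hB,
      mul_nonneg hε.le (add_nonneg (sq_nonneg x₀) (sq_nonneg y₀))]
  -- `(1 - E) * hc₁ + E * hc₂` contradicts the first-order condition in time
  have h₁ := mul_le_mul_of_nonneg_left hc₁.le hB
  have h₂ := mul_lt_mul_of_pos_left hc₂ (exp_pos (-ρ * (x₀ - y₀)))
  linarith [mul_le_mul_of_nonneg_left hincr hκ]

lemma weighted_sub_le_of_barrier (hT : 0 ≤ T) (hκ : 0 ≤ κ) (hA₀ : 0 ≤ A₀) (hA₁ : 0 ≤ A₁)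
    (hρ : 0 ≤ ρ) (hσ : ∀ x, ∀ t ∈ Icc (0:ℝ) T, m ≤ σ x t ^ 2 / 2 ∧ σ x t ^ 2 / 2 ≤ C)
    (hsol : IsBddClassicalSolCauchy T σ f v)
    (hN : ∀ x, ∀ t ∈ Icc (0:ℝ) T, exp (-κ * (T - t)) * |f x t| ≤ N)
    (hc₁ : 2 * N < κ * A₀ + A₁) (hc₂ : 2 * N < 2 * m * A₀ * ρ ^ 2)
    {x y t : ℝ} (hxy : y ≤ x) (ht : t ∈ Icc 0 T) :
    exp (-κ * (T - t)) * (v x t - v y t) ≤ (A₀ + A₁ * T) * ρ * (x - y) := by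
  set B := (A₀ + A₁ * (T - t)) * (1 - exp (-ρ * (x - y)))
  have hpenalized : Tendsto (fun ε => B + ε * (x ^ 2 + y ^ 2)) (𝓝[>] 0) (𝓝 B) := by
    have := (tendsto_const_nhds : Tendsto (fun _ : ℝ => B) (𝓝 0) (𝓝 B)).add
      (tendsto_id.mul_const (x ^ 2 + y ^ 2))
    rw [zero_mul, add_zero] at this
    exact this.mono_left nhdsWithin_le_nhds
  have hsmall : Tendsto (fun ε => 2 * N + 4 * C * ε) (𝓝[>] 0) (𝓝 (2 * N)) := by
    have := (tendsto_const_nhds : Tendsto (fun _ : ℝ => 2 * N) (𝓝 0) (𝓝 (2 * N))).add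
      (tendsto_id.const_mul (4 * C))
    rw [mul_zero, add_zero] at this
    exact this.mono_left nhdsWithin_le_nhds
  have hbarrier : exp (-κ * (T - t)) * (v x t - v y t) ≤ B := by
    refine ge_of_tendsto hpenalized ?_
    filter_upwards [hsmall.eventually (gt_mem_nhds hc₁), hsmall.eventually (gt_mem_nhds hc₂),
      self_mem_nhdsWithin] with ε h₁ h₂ hε
    have := gap_nonpos hT hκ hA₀ hA₁ hρ hε hσ hsol hN h₁ h₂ hxy ht
    simp only [gap] at this
    linarith
  have hB : 0 ≤ 1 - exp (-ρ * (x - y)) := one_sub_exp_neg_mul_nonneg hρ (sub_nonneg.2 hxy)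
  calc exp (-κ * (T - t)) * (v x t - v y t) ≤ B := hbarrier
    _ ≤ (A₀ + A₁ * T) * (1 - exp (-ρ * (x - y))) :=
      mul_le_mul_of_nonneg_right (by nlinarith [ht.1]) hB
    _ ≤ (A₀ + A₁ * T) * (ρ * (x - y)) :=
      mul_le_mul_of_nonneg_left (by rw [neg_mul]; linarith [one_sub_le_exp_neg (ρ * (x - y))])
        (by positivity)
    _ = (A₀ + A₁ * T) * ρ * (x - y) := by ring

lemma weighted_abs_Dx_le_of_barrier (hT : 0 ≤ T) (hκ : 0 ≤ κ) (hA₀ : 0 ≤ A₀) (hA₁ : 0 ≤ A₁)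
    (hρ : 0 ≤ ρ) (hσ : ∀ x, ∀ t ∈ Icc (0:ℝ) T, m ≤ σ x t ^ 2 / 2 ∧ σ x t ^ 2 / 2 ≤ C)
    (hsol : IsBddClassicalSolCauchy T σ f v)
    (hN : ∀ x, ∀ t ∈ Icc (0:ℝ) T, exp (-κ * (T - t)) * |f x t| ≤ N)
    (hc₁ : 2 * N < κ * A₀ + A₁) (hc₂ : 2 * N < 2 * m * A₀ * ρ ^ 2)
    {x t : ℝ} (ht : t ∈ Ico 0 T) :
    exp (-κ * (T - t)) * |Dx v x t| ≤ (A₀ + A₁ * T) * ρ := by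
  have ht' := Ico_subset_Icc_self ht
  have hup {x y : ℝ} (hxy : y ≤ x) :=
    weighted_sub_le_of_barrier hT hκ hA₀ hA₁ hρ hσ hsol hN hc₁ hc₂ hxy ht'
  have hdown {x y : ℝ} (hxy : y ≤ x) :=
    weighted_sub_le_of_barrier hT hκ hA₀ hA₁ hρ hσ hsol.neg
      (fun x t ht => by simpa only [abs_neg] using hN x t ht) hc₁ hc₂ hxy ht'
  have hlip (z : ℝ) : ‖exp (-κ * (T - t)) * v z t - exp (-κ * (T - t)) * v x t‖
      ≤ (A₀ + A₁ * T) * ρ * ‖z - x‖ := by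
    rw [Real.norm_eq_abs, Real.norm_eq_abs, abs_le]
    rcases le_total x z with h | h
    · have h₁ := hup h
      have h₂ := hdown h
      rw [abs_of_nonneg (sub_nonneg.2 h)]
      constructor <;> linarith
    · have h₁ := hup h
      have h₂ := hdown h
      rw [abs_of_nonpos (sub_nonpos.2 h)]
      constructor <;> linarith
  have ⟨_, _, hdiff, _⟩ := hsol
  have hderiv : HasDerivAt (fun z => exp (-κ * (T - t)) * v z t)
      (exp (-κ * (T - t)) * Dx v x t) x :=
    (hdiff x t ht).1.hasDerivAt.const_mul _
  simpa [abs_mul, abs_of_pos (exp_pos _)] using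
    hderiv.le_of_lip' (by positivity) (Eventually.of_forall hlip)

lemma nonneg_of_forall_weighted_abs_le (hT : 0 ≤ T)
    (hN : ∀ x, ∀ t ∈ Icc (0:ℝ) T, exp (-κ * (T - t)) * |f x t| ≤ N) : 0 ≤ N :=
  (by positivity : 0 ≤ exp (-κ * (T - 0)) * |f 0 0|).trans (hN 0 0 ⟨le_rfl, hT⟩)

lemma weighted_abs_Dx_le_div_sqrt (hκ : 0 < κ) (hm : 0 < m)
    (hσ : ∀ x, ∀ t ∈ Icc (0:ℝ) T, m ≤ σ x t ^ 2 / 2 ∧ σ x t ^ 2 / 2 ≤ C)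
    (hsol : IsBddClassicalSolCauchy T σ f v)
    (hN : ∀ x, ∀ t ∈ Icc (0:ℝ) T, exp (-κ * (T - t)) * |f x t| ≤ N)
    {x t : ℝ} (ht : t ∈ Ico 0 T) :
    exp (-κ * (T - t)) * |Dx v x t| ≤ 2 / √(2 * m) / √κ * N := by
  have hT : 0 ≤ T := ht.1.trans ht.2.le
  have hN₀ := nonneg_of_forall_weighted_abs_le hT hN
  refine le_mul_of_forall_lt_imp_le_mul fun N' hN' => ?_
  have hN'₀ : 0 ≤ N' := hN₀.trans hN'.le
  have hsκ : 0 < √κ := sqrt_pos.2 hκ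
  have hsm : 0 < √(2 * m) := sqrt_pos.2 (by positivity)
  have hρ : (√κ / √(2 * m)) ^ 2 = κ / (2 * m) := by
    rw [div_pow, sq_sqrt hκ.le, sq_sqrt (by positivity)]
  have := weighted_abs_Dx_le_of_barrier (A₀ := 2 * N' / κ) (A₁ := 0) (ρ := √κ / √(2 * m)) (x := x)
    hT hκ.le (by positivity) le_rfl (div_nonneg hsκ.le hsm.le) hσ hsol hN
    (by field_simp; linarith) (by rw [hρ]; field_simp; linarith) ht
  convert this using 1
  field_simp
  rw [sq_sqrt hκ.le]
  ring

lemma weighted_abs_Dx_le_sqrt (hT : 0 < T) (hκ : 0 ≤ κ) (hm : 0 < m)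
    (hσ : ∀ x, ∀ t ∈ Icc (0:ℝ) T, m ≤ σ x t ^ 2 / 2 ∧ σ x t ^ 2 / 2 ≤ C)
    (hsol : IsBddClassicalSolCauchy T σ f v)
    (hN : ∀ x, ∀ t ∈ Icc (0:ℝ) T, exp (-κ * (T - t)) * |f x t| ≤ N)
    {x t : ℝ} (ht : t ∈ Ico 0 T) :
    exp (-κ * (T - t)) * |Dx v x t| ≤ √T * (1 / m + 2) * N := by
  have hN₀ := nonneg_of_forall_weighted_abs_le hT.le hN
  refine le_mul_of_forall_lt_imp_le_mul fun N' hN' => ?_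
  have hN'₀ : 0 ≤ N' := hN₀.trans hN'.le
  have hsT : 0 < √T := sqrt_pos.2 hT
  have := weighted_abs_Dx_le_of_barrier (A₀ := N' * T / m) (A₁ := 2 * N') (ρ := 1 / √T) (x := x)
    hT.le hκ (by positivity) (by positivity) (by positivity) hσ hsol hN
    (by nlinarith [mul_nonneg hκ (div_nonneg (mul_nonneg hN'₀ hT.le) hm.le)])
    (by rw [div_pow, sq_sqrt hT.le]; field_simp; linarith) ht
  convert this using 1
  field_simp
  rw [sq_sqrt hT.le]
  ring

end Gap

lemma CondA1.exists_diffusion_bounds {T : ℝ} {σ : ℝ → ℝ → ℝ} (h : CondA1 T σ) :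
    ∃ m > 0, ∃ C, ∀ x, ∀ t ∈ Icc (0:ℝ) T, m ≤ σ x t ^ 2 / 2 ∧ σ x t ^ 2 / 2 ≤ C := by
  obtain ⟨⟨C, hC⟩, ⟨m, hm, hmσ⟩, -⟩ := h
  refine ⟨m ^ 2 / 2, by positivity, C ^ 2 / 2, fun x t ht => ⟨?_, ?_⟩⟩
  · have := pow_le_pow_left₀ hm.le (hmσ x t ht) 2
    rw [sq_abs] at this
    linarith
  · have := pow_le_pow_left₀ (abs_nonneg _) (hC x t ht) 2
    rw [sq_abs] at this
    linarith

/-- Weighted gradient estimate for the Cauchy problem: under (A1) there is `M > 0`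
such that for every `κ > 0`, every bounded, locally Hölder source `f` and every bounded
classical solution `v` of the Cauchy problem,
`sup e^{-κ(T-t)}|D_x v| ≤ (M/κ^{1/3})·sup e^{-κ(T-t)}|f|`, the suprema being expressed
through arbitrary upper bounds `N` of the weighted values of `f`. -/
theorem cauchy_weighted_gradient_estimate
    (T : ℝ) (hT : 0 < T) (σ : ℝ → ℝ → ℝ) (hA1 : CondA1 T σ) :
    ∃ M > 0, ∀ κ > (0:ℝ), ∀ f : ℝ → ℝ → ℝ,
      (∃ C, ∀ x : ℝ, ∀ t ∈ Icc (0:ℝ) T, |f x t| ≤ C) →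
      HolderOnCompacts (univ ×ˢ Icc 0 T) f →
      ∀ v : ℝ → ℝ → ℝ, IsBddClassicalSolCauchy T σ f v →
      ∀ N : ℝ, (∀ x : ℝ, ∀ t ∈ Icc (0:ℝ) T, Real.exp (-κ * (T - t)) * |f x t| ≤ N) →
      ∀ x : ℝ, ∀ t ∈ Ico (0:ℝ) T,
        Real.exp (-κ * (T - t)) * |Dx v x t| ≤ M / κ ^ ((1:ℝ)/3) * N := by
  obtain ⟨m, hm, C, hσ⟩ := hA1.exists_diffusion_bounds
  refine ⟨2 / √(2 * m) + √T * (1 / m + 2), by positivity,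
    fun κ hκ f _ _ v hsol N hN x t ht => ?_⟩
  exact le_div_rpow_third_mul_of_le hκ (by positivity) (by positivity)
    (nonneg_of_forall_weighted_abs_le hT.le hN)
    (weighted_abs_Dx_le_div_sqrt hκ hm hσ hsol hN ht)
    (weighted_abs_Dx_le_sqrt hT hκ.le hm hσ hsol hN ht)
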